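/- Let Γ be a convex lattice polygon whose adjoint Γ' is nonempty, and suppose there exists a direction h₀ that is tight for Γ and of minimal width for Γ' (width_{Γ'}(h₀) = v(Γ')). Then the set of optimal directions of Γ equals the set of directions h that are of minimal width for Γ' and tight for Γ, and v(Γ) = v(Γ') + 2. -/

import Mathlib

noncomputable section

/-- `p` is a lattice point of `ℤ² ⊂ ℝ²`. -/
def IsLat (p : ℝ × ℝ) : Prop := (∃ m : ℤ, p.1 = m) ∧ (∃ n : ℤ, p.2 = n)

/-- evaluation of the integral linear functional `h` at a point `p`. -/
def ev (h : ℤ × ℤ) (p : ℝ × ℝ) : ℝ := (h.1 : ℝ) * p.1 + (h.2 : ℝ) * p.2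

/-- the maximum of `h` on `Γ`. -/
def maxW (Γ : Set (ℝ × ℝ)) (h : ℤ × ℤ) : ℝ := sSup (ev h '' Γ)

/-- the minimum of `h` on `Γ`. -/
def minW (Γ : Set (ℝ × ℝ)) (h : ℤ × ℤ) : ℝ := sInf (ev h '' Γ)

/-- the width of `Γ` in direction `h`. -/
def width (Γ : Set (ℝ × ℝ)) (h : ℤ × ℤ) : ℝ := maxW Γ h - minW Γ h

/-- the adjoint polygon: convex hull of the interior lattice points of `Γ`. -/
def adjoint (Γ : Set (ℝ × ℝ)) : Set (ℝ × ℝ) :=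
  convexHull ℝ {p | p ∈ interior Γ ∧ IsLat p}

/-- `h` is tight for `Γ` (max-tight and min-tight with respect to the adjoint). -/
def Tight (Γ : Set (ℝ × ℝ)) (h : ℤ × ℤ) : Prop :=
  maxW Γ h = maxW (adjoint Γ) h + 1 ∧ minW Γ h = minW (adjoint Γ) h - 1

/-- the lattice width of `Γ`: minimal width over nonzero integral directions. -/
def latticeWidth (Γ : Set (ℝ × ℝ)) : ℝ := sInf (width Γ '' {h : ℤ × ℤ | h ≠ 0})

/-- a primitive integral direction. -/
def IsPrimitive (h : ℤ × ℤ) : Prop := Int.gcd h.1 h.2 = 1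

/-- the set of optimal (minimal width) nonzero directions of `Γ`. -/
def optimalSet (Γ : Set (ℝ × ℝ)) : Set (ℤ × ℤ) :=
  {h | h ≠ 0 ∧ width Γ h = latticeWidth Γ}

/-!
A nonzero integral direction `h` takes integer values at the vertices of `Γ` and at the interior
lattice points, and at an interior point it stays strictly below its maximum over `Γ`. Hence
`max_{Γ'} h ≤ max_Γ h - 1` and, applying this to `-h`, `min_Γ h + 1 ≤ min_{Γ'} h`, so
`width_Γ h ≥ width_{Γ'} h + 2 ≥ v(Γ') + 2`, with equality throughout exactly when `h` is tight for
`Γ` and optimal for `Γ'`. The direction `h₀` attains this lower bound, which gives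
`v(Γ) = v(Γ') + 2` and identifies the optimal directions of `Γ`.
-/

open Filter Topology

lemma isLinearMap_ev (h : ℤ × ℤ) : IsLinearMap ℝ (ev h) :=
  ⟨fun p q => by simp only [ev, Prod.fst_add, Prod.snd_add]; ring,
    fun c p => by simp only [ev, Prod.smul_fst, Prod.smul_snd, smul_eq_mul]; ring⟩

lemma ev_neg (h : ℤ × ℤ) (p : ℝ × ℝ) : ev (-h) p = -ev h p := by
  simp only [ev, Prod.fst_neg, Prod.snd_neg, Int.cast_neg]; ring

lemma IsLat.exists_ev_eq_intCast {p : ℝ × ℝ} (hp : IsLat p) (h : ℤ × ℤ) :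
    ∃ m : ℤ, ev h p = m := by
  obtain ⟨⟨a, ha⟩, ⟨b, hb⟩⟩ := hp
  exact ⟨h.1 * a + h.2 * b, by rw [ev, ha, hb]; push_cast; ring⟩

lemma minW_eq_neg_maxW_neg (Γ : Set (ℝ × ℝ)) (h : ℤ × ℤ) : minW Γ h = -maxW Γ (-h) := by
  rw [minW, maxW, Real.sInf_def]
  congr 2
  ext x
  simp [ev_neg, neg_eq_iff_eq_neg]

lemma width_eq_maxW_add_maxW_neg (Γ : Set (ℝ × ℝ)) (h : ℤ × ℤ) :
    width Γ h = maxW Γ h + maxW Γ (-h) := by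
  rw [width, minW_eq_neg_maxW_neg, sub_neg_eq_add]

lemma ev_le_maxW {Γ : Set (ℝ × ℝ)} {h : ℤ × ℤ} (hb : BddAbove (ev h '' Γ)) {p : ℝ × ℝ}
    (hp : p ∈ Γ) : ev h p ≤ maxW Γ h :=
  le_csSup hb (Set.mem_image_of_mem _ hp)

lemma width_nonneg {Γ : Set (ℝ × ℝ)} (hne : Γ.Nonempty) {h : ℤ × ℤ}
    (hb : BddAbove (ev h '' Γ)) (hb' : BddAbove (ev (-h) '' Γ)) : 0 ≤ width Γ h := by
  obtain ⟨p, hp⟩ := hne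
  rw [width_eq_maxW_add_maxW_neg]
  linarith [ev_le_maxW hb hp, ev_le_maxW hb' hp, ev_neg h p]

lemma ev_le_of_mem_convexHull {A : Set (ℝ × ℝ)} {h : ℤ × ℤ} {c : ℝ} (hA : ∀ p ∈ A, ev h p ≤ c)
    {q : ℝ × ℝ} (hq : q ∈ convexHull ℝ A) : ev h q ≤ c :=
  convexHull_min hA (convex_halfSpace_le (isLinearMap_ev h) c) hq

lemma maxW_convexHull_le {A : Set (ℝ × ℝ)} (hne : A.Nonempty) {h : ℤ × ℤ} {c : ℝ}
    (hA : ∀ p ∈ A, ev h p ≤ c) : maxW (convexHull ℝ A) h ≤ c :=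
  csSup_le ((hne.mono (subset_convexHull ℝ A)).image _) <| by
    rintro _ ⟨q, hq, rfl⟩
    exact ev_le_of_mem_convexHull hA hq

lemma ev_lt_maxW_of_mem_interior {Γ : Set (ℝ × ℝ)} {h : ℤ × ℤ} (hh : h ≠ 0)
    (hb : BddAbove (ev h '' Γ)) {p : ℝ × ℝ} (hp : p ∈ interior Γ) : ev h p < maxW Γ h := by
  set u : ℝ × ℝ := ((h.1 : ℝ), (h.2 : ℝ))
  have hu : 0 < ev h u := by
    have : (h.1 : ℝ) ≠ 0 ∨ (h.2 : ℝ) ≠ 0 := by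
      by_contra! h0
      exact hh (Prod.ext (by exact_mod_cast h0.1) (by exact_mod_cast h0.2))
    simp only [ev, u]
    rcases this with h1 | h1
    · exact add_pos_of_pos_of_nonneg (mul_self_pos.2 h1) (mul_self_nonneg _)
    · exact add_pos_of_nonneg_of_pos (mul_self_nonneg _) (mul_self_pos.2 h1)
  have hline : Tendsto (fun t : ℝ => p + t • u) (𝓝 0) (𝓝 p) := by
    have : Continuous fun t : ℝ => p + t • u := by fun_prop
    simpa using this.tendsto 0
  have hnear : ∀ᶠ t : ℝ in 𝓝[>] 0, p + t • u ∈ Γ :=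
    (hline.eventually (mem_interior_iff_mem_nhds.mp hp)).filter_mono nhdsWithin_le_nhds
  obtain ⟨t, ht, ht0⟩ := (hnear.and self_mem_nhdsWithin).exists
  calc ev h p < ev h p + t * ev h u := lt_add_of_pos_right _ (mul_pos ht0 hu)
    _ = ev h (p + t • u) := by
      rw [(isLinearMap_ev h).map_add, (isLinearMap_ev h).map_smul, smul_eq_mul]
    _ ≤ maxW Γ h := ev_le_maxW hb ht

lemma adjoint_subset {Γ : Set (ℝ × ℝ)} (hΓ : Convex ℝ Γ) : adjoint Γ ⊆ Γ :=
  convexHull_min (fun _ hp => interior_subset hp.1) hΓ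

section LatticePolygon

variable {S : Set (ℝ × ℝ)}

lemma exists_isGreatest_ev_convexHull (hfin : S.Finite) (hne : S.Nonempty) (h : ℤ × ℤ) :
    ∃ x ∈ S, IsGreatest (ev h '' convexHull ℝ S) (ev h x) := by
  obtain ⟨x, hx, hmax⟩ := S.exists_max_image (ev h) hfin hne
  refine ⟨x, hx, ⟨x, subset_convexHull ℝ S hx, rfl⟩, ?_⟩
  rintro _ ⟨q, hq, rfl⟩
  exact ev_le_of_mem_convexHull hmax hq

lemma bddAbove_ev_adjoint_convexHull (hfin : S.Finite) (hne : S.Nonempty) (h : ℤ × ℤ) :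
    BddAbove (ev h '' adjoint (convexHull ℝ S)) :=
  have ⟨_, _, hx⟩ := exists_isGreatest_ev_convexHull hfin hne h
  hx.bddAbove.mono (Set.image_mono (adjoint_subset (convex_convexHull ℝ S)))

lemma maxW_adjoint_le_sub_one (hfin : S.Finite) (hne : S.Nonempty) (hlat : ∀ p ∈ S, IsLat p)
    (hint : {p | p ∈ interior (convexHull ℝ S) ∧ IsLat p}.Nonempty) {h : ℤ × ℤ} (hh : h ≠ 0) :
    maxW (adjoint (convexHull ℝ S)) h ≤ maxW (convexHull ℝ S) h - 1 := by
  obtain ⟨x, hx, hgreat⟩ := exists_isGreatest_ev_convexHull hfin hne h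
  have hmax : maxW (convexHull ℝ S) h = ev h x := hgreat.csSup_eq
  obtain ⟨m, hm⟩ := (hlat x hx).exists_ev_eq_intCast h
  refine maxW_convexHull_le hint fun p ⟨hp, hpl⟩ => ?_
  obtain ⟨a, ha⟩ := hpl.exists_ev_eq_intCast h
  have hlt : ev h p < maxW (convexHull ℝ S) h :=
    ev_lt_maxW_of_mem_interior hh hgreat.bddAbove hp
  rw [hmax, hm, ha, Int.cast_lt] at hlt
  rw [hmax, hm, ha, le_sub_iff_add_le]
  exact_mod_cast Int.add_one_le_of_lt hlt

lemma minW_adjoint_ge_add_one (hfin : S.Finite) (hne : S.Nonempty) (hlat : ∀ p ∈ S, IsLat p)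
    (hint : {p | p ∈ interior (convexHull ℝ S) ∧ IsLat p}.Nonempty) {h : ℤ × ℤ} (hh : h ≠ 0) :
    minW (convexHull ℝ S) h + 1 ≤ minW (adjoint (convexHull ℝ S)) h := by
  rw [minW_eq_neg_maxW_neg, minW_eq_neg_maxW_neg]
  linarith [maxW_adjoint_le_sub_one hfin hne hlat hint (neg_ne_zero.2 hh)]

lemma width_adjoint_add_two_le (hfin : S.Finite) (hne : S.Nonempty) (hlat : ∀ p ∈ S, IsLat p)
    (hint : {p | p ∈ interior (convexHull ℝ S) ∧ IsLat p}.Nonempty) {h : ℤ × ℤ} (hh : h ≠ 0) :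
    width (adjoint (convexHull ℝ S)) h + 2 ≤ width (convexHull ℝ S) h := by
  rw [width, width]
  linarith [maxW_adjoint_le_sub_one hfin hne hlat hint hh,
    minW_adjoint_ge_add_one hfin hne hlat hint hh]

lemma tight_iff_width_eq (hfin : S.Finite) (hne : S.Nonempty) (hlat : ∀ p ∈ S, IsLat p)
    (hint : {p | p ∈ interior (convexHull ℝ S) ∧ IsLat p}.Nonempty) {h : ℤ × ℤ} (hh : h ≠ 0) :
    Tight (convexHull ℝ S) h ↔
      width (convexHull ℝ S) h = width (adjoint (convexHull ℝ S)) h + 2 := by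
  have hmax := maxW_adjoint_le_sub_one hfin hne hlat hint hh
  have hmin := minW_adjoint_ge_add_one hfin hne hlat hint hh
  rw [Tight, width, width]
  constructor
  · rintro ⟨hmax', hmin'⟩
    linarith
  · intro hw
    constructor <;> linarith

end LatticePolygon

lemma sInf_image_eq_add_of_le {ι : Type*} {s : Set ι} {f g : ι → ℝ} {c : ℝ}
    (hg : BddBelow (g '' s)) (hle : ∀ i ∈ s, g i + c ≤ f i) {i₀ : ι} (hi₀ : i₀ ∈ s)
    (hf : f i₀ = g i₀ + c) (hg₀ : g i₀ = sInf (g '' s)) :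
    sInf (f '' s) = sInf (g '' s) + c := by
  have hlow : ∀ y ∈ f '' s, sInf (g '' s) + c ≤ y := by
    rintro _ ⟨i, hi, rfl⟩
    linarith [csInf_le hg (Set.mem_image_of_mem g hi), hle i hi]
  refine le_antisymm ?_ (le_csInf ⟨f i₀, Set.mem_image_of_mem f hi₀⟩ hlow)
  calc sInf (f '' s) ≤ f i₀ := csInf_le ⟨_, hlow⟩ (Set.mem_image_of_mem f hi₀)
    _ = sInf (g '' s) + c := by rw [hf, hg₀]

/-- if some direction is simultaneously tight for `Γ` and optimal for the
adjoint `Γ'`, then the optimal directions of `Γ` are exactly the directions optimal for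
`Γ'` and tight for `Γ`, and `v(Γ) = v(Γ') + 2`. -/
theorem stmt_8 (S : Set (ℝ × ℝ)) (hfin : S.Finite) (hne : S.Nonempty)
    (hlat : ∀ p ∈ S, IsLat p)
    (Γ : Set (ℝ × ℝ)) (hΓ : Γ = convexHull ℝ S)
    (hint : {p | p ∈ interior Γ ∧ IsLat p}.Nonempty)
    (h₀ : ℤ × ℤ) (hh₀ : h₀ ≠ 0)
    (ht₀ : Tight Γ h₀)
    (hopt₀ : width (adjoint Γ) h₀ = latticeWidth (adjoint Γ)) :
    optimalSet Γ =
      {h : ℤ × ℤ | h ≠ 0 ∧ width (adjoint Γ) h = latticeWidth (adjoint Γ) ∧ Tight Γ h} ∧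
    latticeWidth Γ = latticeWidth (adjoint Γ) + 2 := by
  subst hΓ
  have hbdd : BddBelow (width (adjoint (convexHull ℝ S)) '' {h | h ≠ 0}) := by
    refine ⟨0, ?_⟩
    rintro _ ⟨h, -, rfl⟩
    exact width_nonneg (hint.mono (subset_convexHull ℝ _))
      (bddAbove_ev_adjoint_convexHull hfin hne h) (bddAbove_ev_adjoint_convexHull hfin hne (-h))
  have hle := fun h => width_adjoint_add_two_le hfin hne hlat hint (h := h)
  have hLW : latticeWidth (convexHull ℝ S) = latticeWidth (adjoint (convexHull ℝ S)) + 2 :=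
    sInf_image_eq_add_of_le hbdd hle hh₀ ((tight_iff_width_eq hfin hne hlat hint hh₀).1 ht₀)
      hopt₀
  refine ⟨Set.ext fun h => and_congr_right fun hh => ?_, hLW⟩
  rw [tight_iff_width_eq hfin hne hlat hint hh, hLW]
  have hmin : latticeWidth (adjoint (convexHull ℝ S)) ≤ width (adjoint (convexHull ℝ S)) h :=
    csInf_le hbdd ⟨h, hh, rfl⟩
  have hgap := hle h hh
  constructor
  · intro hw
    constructor <;> linarith
  · rintro ⟨hw', hw⟩
    linarith
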